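/- For every real epsilon with 0 < epsilon < 1 and every real alpha with 11/8 < alpha < 8/5, setting z'_k = (1 + epsilon/4)*alpha and y_k = (z'_k - 1)/z'_k, one has (log(2*y_k))^2 * (z'_k - 1) ≤ -(3/2)*alpha*log(2*(alpha - 1)/alpha). -/
import Mathlib


theorem log_sq_bound (epsilon : ℝ) (he0 : 0 < epsilon) (he1 : epsilon < 1)
    (alpha : ℝ) (ha1 : 11 / 8 < alpha) (ha2 : alpha < 8 / 5)
    (zk : ℝ) (hzk : zk = (1 + epsilon / 4) * alpha)
    (yk : ℝ) (hyk : yk = (zk - 1) / zk) :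
    (Real.log (2 * yk)) ^ 2 * (zk - 1) ≤
      -(3 / 2) * alpha * Real.log (2 * (alpha - 1) / alpha) := by
  have hz1 : (11:ℝ)/8 < zk := by rw [hzk]; nlinarith
  have hz2 : zk < 2 := by rw [hzk]; nlinarith
  have hzpos : (0:ℝ) < zk := by linarith
  have hy : 2 * yk = 2 * (zk - 1) / zk := by rw [hyk]; ring
  have h2y1 : 2 * yk < 1 := by
    rw [hy, div_lt_one hzpos]; linarith
  have h2ylb : (6:ℝ)/11 ≤ 2 * yk := by
    rw [hy, le_div_iff₀ hzpos]; linarith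
  have hL : Real.log (2*yk) ≤ 0 := Real.log_nonpos (by linarith) (le_of_lt h2y1)
  have hlog116 : Real.log ((11:ℝ)/6) ≤ 71/100 := by
    have h1 : ((11:ℝ)/6) ≤ (271/200)^2 := by norm_num
    have h2 : Real.log ((11:ℝ)/6) ≤ Real.log (((271:ℝ)/200)^2) :=
      Real.log_le_log (by norm_num) h1
    rw [Real.log_pow] at h2
    have h3 : Real.log ((271:ℝ)/200) ≤ 271/200 - 1 :=
      Real.log_le_sub_one_of_pos (by norm_num)
    push_cast at h2
    nlinarith
  have hlognn : 0 ≤ Real.log ((11:ℝ)/6) := Real.log_nonneg (by norm_num)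
  have hlb : -Real.log ((11:ℝ)/6) ≤ Real.log (2*yk) := by
    have h := Real.log_le_log (by norm_num : (0:ℝ) < 6/11) h2ylb
    rw [show ((6:ℝ)/11) = ((11:ℝ)/6)⁻¹ by norm_num, Real.log_inv] at h
    linarith
  have hsq : (Real.log (2*yk))^2 ≤ (Real.log ((11:ℝ)/6))^2 :=
    sq_le_sq' hlb (le_trans hL hlognn)
  -- RHS lower bound
  have hapos : (0:ℝ) < alpha := by linarith
  have ht : 2 * (alpha - 1) / alpha ≤ 3/4 := by
    rw [div_le_iff₀ hapos]; linarith
  have htpos : (0:ℝ) < 2 * (alpha - 1) / alpha := by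
    apply div_pos (by linarith) hapos
  have hlt : Real.log (2 * (alpha - 1) / alpha) ≤ -(1/4 : ℝ) := by
    have h1 : Real.log (2 * (alpha - 1) / alpha) ≤ Real.log ((3:ℝ)/4) :=
      Real.log_le_log htpos ht
    have h2 : Real.log ((3:ℝ)/4) ≤ 3/4 - 1 := Real.log_le_sub_one_of_pos (by norm_num)
    linarith
  have hR : (33:ℝ)/64 ≤ -(3 / 2) * alpha * Real.log (2 * (alpha - 1) / alpha) := by
    nlinarith
  have hLHS : (Real.log (2 * yk)) ^ 2 * (zk - 1) ≤ (71/100:ℝ)^2 := by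
    nlinarith [sq_nonneg (Real.log (2*yk)), sq_nonneg (Real.log ((11:ℝ)/6))]
  nlinarith
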